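/- arXiv:2404.04145 — 3 statements merged into one kernel-verified Lean document; each statement's English description precedes it below -/
import Mathlib

section
/- Let X be a real Hilbert space, A : X → X bounded linear, ε > 0, H ⊆ X convex. Suppose w minimizes φ ↦ ‖Aφ + b‖² + ε‖φ‖² over H, and suppose v* ∈ H satisfies Av* + b* = 0 for some b* ∈ X. Then, with h = w − v*, ‖Ah + (b − b*)‖² + ε‖h‖² ≤ −ε⟨v*, h⟩ + ‖b − b*‖·‖Ah + (b − b*)‖ holds; in particular ‖Ah‖² + ε‖h‖² ≤ C(‖b − b*‖² + ε‖v*‖²) + ½‖Ah‖² for a suitable absolute constant C. -/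
open scoped RealInnerProductSpace


private lemma stmt_11_arith1 (ε a hn v β : ℝ) (hε : 0 < ε)
    (P1 : a^2 + ε * hn^2 ≤ ε * (v * hn) + β * a) :
    (3/4) * a^2 + ε * hn^2 / 2 ≤ ε * v^2 / 2 + β^2 := by
  nlinarith [mul_nonneg hε.le (sq_nonneg (v - hn)), sq_nonneg (a - 2*β)]

private lemma stmt_11_arith2 (ε a hn v β s : ℝ) (hε : 0 < ε) (ha : 0 ≤ a) (hβ : 0 ≤ β) (hs : 0 ≤ s)
    (P3 : (3/4) * a^2 + ε * hn^2 / 2 ≤ ε * v^2 / 2 + β^2)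
    (htri : s ≤ a + β) :
    s^2 + ε * hn^2 ≤ 10 * (β^2 + ε * v^2) + (1/2) * s^2 := by
  nlinarith [sq_nonneg (a - β), mul_nonneg hε.le (sq_nonneg v), sq_nonneg β,
    mul_nonneg (add_nonneg ha hβ) hs, sq_nonneg (a + β - s)]

theorem stmt_11 {X : Type*} [NormedAddCommGroup X] [InnerProductSpace ℝ X]
    [CompleteSpace X] (A : X →L[ℝ] X) (b bstar : X) (ε : ℝ) (hε : 0 < ε)
    (H : Set X) (hH : Convex ℝ H) (w : X) (hw : w ∈ H)
    (hmin : ∀ φ ∈ H, ‖A w + b‖^2 + ε * ‖w‖^2 ≤ ‖A φ + b‖^2 + ε * ‖φ‖^2)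
    (vstar : X) (hvstar : vstar ∈ H) (hsol : A vstar + bstar = 0) :
    (‖A (w - vstar) + (b - bstar)‖^2 + ε * ‖w - vstar‖^2 ≤
      -(ε * ⟪vstar, w - vstar⟫) + ‖b - bstar‖ * ‖A (w - vstar) + (b - bstar)‖) ∧
    ∃ C > (0:ℝ), ‖A (w - vstar)‖^2 + ε * ‖w - vstar‖^2 ≤
      C * (‖b - bstar‖^2 + ε * ‖vstar‖^2) + (1/2) * ‖A (w - vstar)‖^2 := by
  have hAv : A vstar = -bstar := eq_neg_of_add_eq_zero_left hsol
  have key : A (w - vstar) + (b - bstar) = A w + b := by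
    rw [map_sub, hAv]; abel
  -- variational inequality
  set d := vstar - w with hd
  set g := ⟪A w + b, A d⟫ + ε * ⟪w, d⟫ with hgdef
  have hg : 0 ≤ g := by
    by_contra hneg
    push_neg at hneg
    set c := ‖A d‖^2 + ε * ‖d‖^2 with hc
    have hc0 : 0 ≤ c := by positivity
    have hc1 : 0 < c + 1 := by linarith
    set t := min 1 (-g / (c + 1)) with ht
    have ht0 : 0 < t := lt_min one_pos (div_pos (neg_pos.2 hneg) hc1)
    have ht1 : t ≤ 1 := min_le_left _ _
    have hmem : w + t • d ∈ H := by
      have := hH hw hvstar (by linarith : (0:ℝ) ≤ 1 - t) (le_of_lt ht0) (by ring)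
      convert this using 1
      simp only [hd]
      module
    have hexp := hmin _ hmem
    have hA : A (w + t • d) + b = (A w + b) + t • (A d) := by
      simp [map_add, map_smul]; abel
    have e1 : ‖A (w + t • d) + b‖^2
        = ‖A w + b‖^2 + 2 * (t * ⟪A w + b, A d⟫) + t^2 * ‖A d‖^2 := by
      rw [hA, norm_add_sq_real, real_inner_smul_right, norm_smul]
      simp [mul_pow, sq_abs]
    have e2 : ‖w + t • d‖^2 = ‖w‖^2 + 2 * (t * ⟪w, d⟫) + t^2 * ‖d‖^2 := by
      rw [norm_add_sq_real, real_inner_smul_right, norm_smul]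
      simp [mul_pow, sq_abs]
    have hineq : 0 ≤ 2 * t * g + t^2 * c := by
      rw [e1, e2] at hexp
      simp only [hgdef, hc]
      nlinarith [hexp]
    have htc : t * (c + 1) ≤ -g := by
      have : t ≤ -g / (c + 1) := min_le_right _ _
      calc t * (c + 1) ≤ (-g / (c + 1)) * (c + 1) := by nlinarith
        _ = -g := by field_simp
    have : 2 * t * g + t^2 * c < 0 := by nlinarith
    linarith
  -- rewrite g
  have hAd : A d = -(A (w - vstar)) := by rw [hd, map_sub, map_sub]; abel
  have hinner1 : ⟪A w + b, A d⟫
      = -(‖A w + b‖^2 - ⟪A w + b, b - bstar⟫) := by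
    rw [hAd, inner_neg_right]
    congr 1
    have : A (w - vstar) = (A w + b) - (b - bstar) := by
      rw [eq_sub_iff_add_eq]; exact key
    rw [this, inner_sub_right, real_inner_self_eq_norm_sq]
  have hinner2 : ⟪w, d⟫ = -(⟪vstar, w - vstar⟫ + ‖w - vstar‖^2) := by
    have hw' : w = vstar + (w - vstar) := by abel
    rw [hd]
    calc ⟪w, vstar - w⟫ = ⟪vstar + (w - vstar), -(w - vstar)⟫ := by
          rw [← hw']; congr 1; abel
      _ = -(⟪vstar, w - vstar⟫ + ‖w - vstar‖^2) := by
          rw [inner_neg_right, inner_add_left, real_inner_self_eq_norm_sq]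
  have hCS : ⟪A w + b, b - bstar⟫ ≤ ‖A w + b‖ * ‖b - bstar‖ :=
    real_inner_le_norm _ _
  have first : ‖A (w - vstar) + (b - bstar)‖^2 + ε * ‖w - vstar‖^2 ≤
      -(ε * ⟪vstar, w - vstar⟫) + ‖b - bstar‖ * ‖A (w - vstar) + (b - bstar)‖ := by
    rw [key]
    rw [hgdef, hinner1, hinner2] at hg
    nlinarith [hg, hCS]
  refine ⟨first, 10, by norm_num, ?_⟩
  have hCS2 : -⟪vstar, w - vstar⟫ ≤ ‖vstar‖ * ‖w - vstar‖ := by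
    have := real_inner_le_norm (-vstar) (w - vstar)
    simpa [inner_neg_left] using this
  have htri : ‖A (w - vstar)‖ ≤ ‖A w + b‖ + ‖b - bstar‖ := by
    have : A (w - vstar) = (A w + b) - (b - bstar) := by
      rw [eq_sub_iff_add_eq]; exact key
    rw [this]; exact norm_sub_le _ _
  rw [key] at first
  have P1 : ‖A w + b‖^2 + ε * ‖w - vstar‖^2 ≤
      ε * (‖vstar‖ * ‖w - vstar‖) + ‖b - bstar‖ * ‖A w + b‖ := by
    have := mul_le_mul_of_nonneg_left hCS2 hε.le
    have e : ε * -⟪vstar, w - vstar⟫ = -(ε * ⟪vstar, w - vstar⟫) := by ring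
    rw [e] at this
    linarith [first, this]
  exact stmt_11_arith2 ε _ _ _ _ _ hε (norm_nonneg _) (norm_nonneg _) (norm_nonneg _)
    (stmt_11_arith1 ε _ _ _ _ hε P1) htri
end

section
/- Let {Ψ_n}_{n≥1} be the orthonormal basis of L²(0, 2π) obtained by applying the Gram–Schmidt process to {θ^{n−1}e^θ}_{n≥1}. Then for every n ≥ 1, Ψ_n′ is not identically zero on [0, 2π], and moreover s_{nn} = ∫₀^{2π} Ψ_n′(θ) Ψ_n(θ) dθ = 1 for every n. -/
open MeasureTheory Real

/-- `φ_n(θ) = θ^{n-1} e^θ` (indexed here from `n = 0`, i.e. `φ n = θ^n e^θ`). -/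
noncomputable def phiGS (n : ℕ) : ℝ → ℝ := fun θ => θ ^ n * Real.exp θ

lemma image_le_eq_range_GS (f : ℕ → ℝ → ℝ) (n : ℕ) :
    f '' {j | j ≤ n} = Set.range (fun i : Fin (n + 1) => f i.val) := by
  ext x
  constructor
  · rintro ⟨j, hj, rfl⟩
    exact ⟨⟨j, Nat.lt_succ_of_le hj⟩, rfl⟩
  · rintro ⟨i, rfl⟩
    exact ⟨i.val, Nat.lt_succ_iff.mp i.isLt, rfl⟩

theorem stmt_17 (Ψ : ℕ → ℝ → ℝ)
    -- Ψ is obtained from {φ_n} by the Gram–Schmidt process on L²(0, 2π):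
    -- spans agree at every stage,
    (hspan : ∀ n : ℕ, Submodule.span ℝ ((fun j : ℕ => Ψ j) '' {j | j ≤ n})
        = Submodule.span ℝ (phiGS '' {j | j ≤ n}))
    -- the family is orthonormal in L²(0, 2π),
    (horth : ∀ m n : ℕ, (∫ θ in (0:ℝ)..(2 * π), Ψ m θ * Ψ n θ)
        = if m = n then 1 else 0)
    -- and Gram–Schmidt normalization: Ψ_n has positive component along φ_n
    (hpos : ∀ n : ℕ, 0 < ∫ θ in (0:ℝ)..(2 * π), Ψ n θ * phiGS n θ) :
    ∀ n : ℕ,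
      (∃ θ ∈ Set.Icc (0:ℝ) (2 * π), deriv (Ψ n) θ ≠ 0) ∧
      (∫ θ in (0:ℝ)..(2 * π), deriv (Ψ n) θ * Ψ n θ) = 1 := by
  -- Every Ψ m is a polynomial combination of the φ_j's
  have hΨrep : ∀ m : ℕ, ∃ c : Fin (m + 1) → ℝ,
      Ψ m = fun θ => ∑ i : Fin (m + 1), c i * (θ ^ (i : ℕ) * Real.exp θ) := by
    intro m
    have h1 : Ψ m ∈ Submodule.span ℝ ((fun j : ℕ => Ψ j) '' {j | j ≤ m}) :=
      Submodule.subset_span ⟨m, le_refl m, rfl⟩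
    rw [hspan m, image_le_eq_range_GS phiGS m, Submodule.mem_span_range_iff_exists_fun] at h1
    obtain ⟨c, hc⟩ := h1
    refine ⟨c, ?_⟩
    funext θ
    have := congrFun hc θ
    simpa [phiGS, Finset.sum_apply] using this.symm
  have hΨcont : ∀ m : ℕ, Continuous (Ψ m) := by
    intro m
    obtain ⟨c, hc⟩ := hΨrep m
    rw [hc]
    exact continuous_finset_sum _ fun i _ => by fun_prop
  intro n
  obtain ⟨c, hc⟩ := hΨrep n
  set g : ℝ → ℝ :=
    fun θ => ∑ i : Fin (n + 1), c i * (((i : ℕ) : ℝ) * θ ^ ((i : ℕ) - 1) * Real.exp θ)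
    with hg
  have hgcont : Continuous g := continuous_finset_sum _ fun i _ => by fun_prop
  -- derivative formula
  have hderiv : ∀ θ : ℝ, deriv (Ψ n) θ = g θ + Ψ n θ := by
    intro θ
    have h1 : HasDerivAt (Ψ n)
        (∑ i : Fin (n + 1), c i *
          ((((i : ℕ) : ℝ) * θ ^ ((i : ℕ) - 1)) * Real.exp θ + θ ^ (i : ℕ) * Real.exp θ)) θ := by
      rw [hc]
      exact HasDerivAt.fun_sum fun i _ =>
        (((hasDerivAt_pow (i : ℕ) θ).mul (Real.hasDerivAt_exp θ)).const_mul (c i))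
    rw [h1.deriv, hg, hc]
    rw [← Finset.sum_add_distrib]
    exact Finset.sum_congr rfl fun i _ => by ring
  -- g lies in the span of the lower Ψ's
  have hgmem : g ∈ Submodule.span ℝ ((fun j : ℕ => Ψ j) '' {j | j ≤ n - 1}) := by
    rw [hspan (n - 1)]
    have hgsum : g = ∑ i : Fin (n + 1), (c i * ((i : ℕ) : ℝ)) • phiGS ((i : ℕ) - 1) := by
      funext θ
      simp only [hg, Finset.sum_apply, Pi.smul_apply, smul_eq_mul, phiGS]
      exact Finset.sum_congr rfl fun i _ => by ring
    rw [hgsum]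
    refine Submodule.sum_mem _ fun i _ => Submodule.smul_mem _ _ (Submodule.subset_span ?_)
    exact ⟨(i : ℕ) - 1, Nat.sub_le_sub_right (Nat.lt_succ_iff.mp i.isLt) 1, rfl⟩
  -- hence ∫ g Ψn = 0
  have hgint0 : (∫ θ in (0:ℝ)..(2 * π), g θ * Ψ n θ) = 0 := by
    rcases Nat.eq_zero_or_pos n with hn | hn
    · subst hn
      have hgz : ∀ θ : ℝ, g θ = 0 := by
        intro θ
        simp [hg, Fin.sum_univ_one]
      have : Set.EqOn (fun θ => g θ * Ψ 0 θ) (fun _ => (0:ℝ)) (Set.uIcc (0:ℝ) (2 * π)) :=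
        fun θ _ => by simp [hgz θ]
      rw [intervalIntegral.integral_congr this]
      simp
    · rw [image_le_eq_range_GS Ψ (n - 1), Submodule.mem_span_range_iff_exists_fun] at hgmem
      obtain ⟨d, hd⟩ := hgmem
      have hgθ : ∀ θ : ℝ, g θ = ∑ k : Fin ((n - 1) + 1), d k * Ψ k.val θ := by
        intro θ
        rw [← hd]
        simp [Finset.sum_apply]
      have heq : Set.EqOn (fun θ => g θ * Ψ n θ)
          (fun θ => ∑ k : Fin ((n - 1) + 1), d k * (Ψ k.val θ * Ψ n θ))
          (Set.uIcc (0:ℝ) (2 * π)) := by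
        intro θ _
        simp only [hgθ θ, Finset.sum_mul]
        exact Finset.sum_congr rfl fun k _ => mul_assoc _ _ _
      have hsum := intervalIntegral.integral_finset_sum (μ := volume) (a := (0:ℝ))
        (b := 2 * π) (s := Finset.univ)
        (f := fun (k : Fin ((n - 1) + 1)) (θ : ℝ) => d k * (Ψ k.val θ * Ψ n θ))
        (fun k _ =>
          ((continuous_const.mul ((hΨcont k.val).mul (hΨcont n))).intervalIntegrable _ _))
      rw [intervalIntegral.integral_congr heq, hsum]
      refine Finset.sum_eq_zero fun k _ => ?_
      rw [intervalIntegral.integral_const_mul, horth k.val n]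
      have hk : (k : ℕ) ≠ n := by
        have : (k : ℕ) ≤ n - 1 := Nat.lt_succ_iff.mp k.isLt
        omega
      simp [hk]
  -- the main integral identity
  have hmain : (∫ θ in (0:ℝ)..(2 * π), deriv (Ψ n) θ * Ψ n θ) = 1 := by
    have heq : Set.EqOn (fun θ => deriv (Ψ n) θ * Ψ n θ)
        (fun θ => g θ * Ψ n θ + Ψ n θ * Ψ n θ) (Set.uIcc (0:ℝ) (2 * π)) := by
      intro θ _
      simp only [hderiv θ]
      ring
    rw [intervalIntegral.integral_congr heq,
      intervalIntegral.integral_add (f := fun θ => g θ * Ψ n θ) (g := fun θ => Ψ n θ * Ψ n θ)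
        ((hgcont.mul (hΨcont n)).intervalIntegrable _ _)
        (((hΨcont n).mul (hΨcont n)).intervalIntegrable _ _),
      hgint0, horth n n]
    simp
  refine ⟨?_, hmain⟩
  by_contra h
  push_neg at h
  have hzero : (∫ θ in (0:ℝ)..(2 * π), deriv (Ψ n) θ * Ψ n θ) = 0 := by
    have hz : Set.EqOn (fun θ => deriv (Ψ n) θ * Ψ n θ) (fun _ => (0:ℝ))
        (Set.uIcc (0:ℝ) (2 * π)) := by
      intro θ hθ
      have hθ' : θ ∈ Set.Icc (0:ℝ) (2 * π) := by
        rwa [Set.uIcc_of_le (by positivity)] at hθ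
      simp [h θ hθ']
    rw [intervalIntegral.integral_congr hz]
    simp
  rw [hmain] at hzero
  norm_num at hzero
end

section
/- Let S = (s_{mn})_{m,n=1}^N with s_{mn} = ∫₀^{2π} Ψ_n′(θ) Ψ_m(θ) dθ, for the polynomial-exponential orthonormal basis {Ψ_n}. Then, since Ψ_n′ ∈ span{Ψ_1, …, Ψ_n}, the matrix S is upper triangular (s_{mn} = 0 whenever n < m) with diagonal entries 1, and hence S is invertible with det S = 1. -/
open MeasureTheory Real

/-- `φ_n(θ) = θ^{n-1} e^θ` (indexed here from `n = 0`, i.e. `φ n = θ^n e^θ`). -/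
noncomputable def phiGS18 (n : ℕ) : ℝ → ℝ := fun θ => θ ^ n * Real.exp θ

lemma phiGS18_continuous (n : ℕ) : Continuous (phiGS18 n) := by
  unfold phiGS18; continuity

lemma phiGS18_hasDerivAt (n : ℕ) (θ : ℝ) :
    HasDerivAt (phiGS18 n) ((n : ℝ) * θ ^ (n - 1) * Real.exp θ + θ ^ n * Real.exp θ) θ := by
  have h := (hasDerivAt_pow n θ).mul (Real.hasDerivAt_exp θ)
  have e : phiGS18 n = (fun x => x ^ n) * Real.exp := rfl
  rw [e]; convert h using 1

/-- Everything in the span of the `phiGS18` family is continuous. -/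
lemma span_continuous {s : Set ℕ} {g : ℝ → ℝ}
    (hg : g ∈ Submodule.span ℝ (phiGS18 '' s)) : Continuous g := by
  induction hg using Submodule.span_induction with
  | mem x hx => obtain ⟨n, -, rfl⟩ := hx; exact phiGS18_continuous n
  | zero => exact continuous_const
  | add x y _ _ hx hy => exact hx.add hy
  | smul a x _ hx => exact hx.const_smul a

/-- Main structural lemma: if `g ∈ span {φ_j : j ≤ n}` then `g` is differentiable and
`deriv g - g ∈ span {φ_j : j < n}`. -/
lemma deriv_sub_self_mem (n : ℕ) {g : ℝ → ℝ}
    (hg : g ∈ Submodule.span ℝ (phiGS18 '' {j | j ≤ n})) :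
    Differentiable ℝ g ∧
      (fun θ => deriv g θ - g θ) ∈ Submodule.span ℝ (phiGS18 '' {j | j < n}) := by
  induction hg using Submodule.span_induction with
  | mem x hx =>
      obtain ⟨j, hj, rfl⟩ := hx
      refine ⟨fun θ => (phiGS18_hasDerivAt j θ).differentiableAt, ?_⟩
      have hderiv : (fun θ => deriv (phiGS18 j) θ - phiGS18 j θ)
          = (j : ℝ) • phiGS18 (j - 1) := by
        funext θ
        rw [(phiGS18_hasDerivAt j θ).deriv]
        simp [phiGS18]
        ring
      rw [hderiv]
      rcases Nat.eq_zero_or_pos j with rfl | hjpos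
      · simp
      · refine Submodule.smul_mem _ _ (Submodule.subset_span ⟨j - 1, ?_, rfl⟩)
        have hj' : j ≤ n := hj
        simp only [Set.mem_setOf_eq]
        omega
  | zero =>
      refine ⟨differentiable_const 0, ?_⟩
      have : (fun θ => deriv (0 : ℝ → ℝ) θ - (0 : ℝ → ℝ) θ) = (0 : ℝ → ℝ) := by
        funext θ
        show deriv (fun _ => (0:ℝ)) θ - 0 = 0
        simp
      rw [this]; exact Submodule.zero_mem _
  | add x y hx hy ihx ihy =>
      refine ⟨ihx.1.add ihy.1, ?_⟩
      have : (fun θ => deriv (x + y) θ - (x + y) θ)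
          = (fun θ => deriv x θ - x θ) + (fun θ => deriv y θ - y θ) := by
        funext θ
        have h : HasDerivAt (x + y) (deriv x θ + deriv y θ) θ :=
          ((ihx.1 θ).hasDerivAt.add (ihy.1 θ).hasDerivAt)
        simp only [Pi.add_apply]
        rw [h.deriv]; ring
      rw [this]; exact Submodule.add_mem _ ihx.2 ihy.2
  | smul a x hx ihx =>
      refine ⟨ihx.1.const_smul a, ?_⟩
      have : (fun θ => deriv (a • x) θ - (a • x) θ)
          = a • (fun θ => deriv x θ - x θ) := by
        funext θ
        have h : HasDerivAt (a • x) (a • deriv x θ) θ := (ihx.1 θ).hasDerivAt.const_smul a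
        simp only [Pi.smul_apply, smul_eq_mul]
        rw [h.deriv]; simp [smul_eq_mul]; ring
      rw [this]; exact Submodule.smul_mem _ _ ihx.2

theorem stmt_18 (N : ℕ) (Ψ : ℕ → ℝ → ℝ)
    -- Ψ is the polynomial-exponential orthonormal basis obtained from {φ_n}
    -- by the Gram–Schmidt process on L²(0, 2π):
    (hspan : ∀ n : ℕ, Submodule.span ℝ ((fun j : ℕ => Ψ j) '' {j | j ≤ n})
        = Submodule.span ℝ (phiGS18 '' {j | j ≤ n}))
    (horth : ∀ m n : ℕ, (∫ θ in (0:ℝ)..(2 * π), Ψ m θ * Ψ n θ)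
        = if m = n then 1 else 0)
    (hpos : ∀ n : ℕ, 0 < ∫ θ in (0:ℝ)..(2 * π), Ψ n θ * phiGS18 n θ)
    (S : Matrix (Fin N) (Fin N) ℝ)
    (hS : ∀ m n : Fin N, S m n = ∫ θ in (0:ℝ)..(2 * π), deriv (Ψ n) θ * Ψ m θ) :
    (∀ m n : Fin N, n < m → S m n = 0) ∧
    (∀ n : Fin N, S n n = 1) ∧
    S.det = 1 ∧ IsUnit S := by
  -- Ψ n is in the span of the φ's
  have hΨmem : ∀ n : ℕ, Ψ n ∈ Submodule.span ℝ (phiGS18 '' {j | j ≤ n}) := by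
    intro n
    rw [← hspan n]
    exact Submodule.subset_span ⟨n, le_refl n, rfl⟩
  have hΨcont : ∀ n : ℕ, Continuous (Ψ n) := fun n => span_continuous (hΨmem n)
  -- the span of Ψ's over {j < n} equals the span of φ's over {j < n}
  have hspan' : ∀ n : ℕ, Submodule.span ℝ ((fun j : ℕ => Ψ j) '' {j | j < n})
      = Submodule.span ℝ (phiGS18 '' {j | j < n}) := by
    intro n
    rcases n with _ | k
    · simp [Set.eq_empty_iff_forall_notMem.mpr (fun j (h : j < 0) => Nat.not_lt_zero j h)]
    · have : {j : ℕ | j < k + 1} = {j : ℕ | j ≤ k} := by ext j; simp [Nat.lt_succ_iff]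
      rw [this]; exact hspan k
  -- integrating an element of span {Ψ_j : j < m} against Ψ_m gives 0
  have hint0 : ∀ m : ℕ, ∀ g : ℝ → ℝ,
      g ∈ Submodule.span ℝ ((fun j : ℕ => Ψ j) '' {j | j < m}) →
      Continuous g ∧ (∫ θ in (0:ℝ)..(2 * π), g θ * Ψ m θ) = 0 := by
    intro m g hg
    induction hg using Submodule.span_induction with
    | mem x hx =>
        obtain ⟨j, hj, rfl⟩ := hx
        refine ⟨hΨcont j, ?_⟩
        have hj' : j < m := hj
        rw [horth j m, if_neg (Nat.ne_of_lt hj')]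
    | zero => exact ⟨continuous_const, by simp⟩
    | add x y _ _ ihx ihy =>
        refine ⟨ihx.1.add ihy.1, ?_⟩
        have hix : IntervalIntegrable (fun θ => x θ * Ψ m θ) volume 0 (2 * π) :=
          (ihx.1.mul (hΨcont m)).intervalIntegrable _ _
        have hiy : IntervalIntegrable (fun θ => y θ * Ψ m θ) volume 0 (2 * π) :=
          (ihy.1.mul (hΨcont m)).intervalIntegrable _ _
        have : (∫ θ in (0:ℝ)..(2 * π), (x + y) θ * Ψ m θ)
            = (∫ θ in (0:ℝ)..(2 * π), x θ * Ψ m θ) + ∫ θ in (0:ℝ)..(2 * π), y θ * Ψ m θ := by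
          rw [← intervalIntegral.integral_add hix hiy]
          congr 1; funext θ; simp [add_mul]
        rw [this, ihx.2, ihy.2, add_zero]
    | smul a x _ ihx =>
        refine ⟨ihx.1.const_smul a, ?_⟩
        have : (∫ θ in (0:ℝ)..(2 * π), (a • x) θ * Ψ m θ)
            = a * ∫ θ in (0:ℝ)..(2 * π), x θ * Ψ m θ := by
          rw [← intervalIntegral.integral_const_mul]
          congr 1; funext θ; simp [mul_assoc]
        rw [this, ihx.2, mul_zero]
  -- structure of deriv (Ψ n)
  have hder : ∀ n : ℕ, Differentiable ℝ (Ψ n) ∧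
      (fun θ => deriv (Ψ n) θ - Ψ n θ) ∈
        Submodule.span ℝ ((fun j : ℕ => Ψ j) '' {j | j < n}) := by
    intro n
    obtain ⟨hdiff, hmem⟩ := deriv_sub_self_mem n (hΨmem n)
    exact ⟨hdiff, by rw [hspan' n]; exact hmem⟩
  -- below-diagonal entries vanish
  have hlow : ∀ m n : Fin N, n < m → S m n = 0 := by
    intro m n hmn
    rw [hS m n]
    -- deriv (Ψ n) ∈ span {Ψ_j : j < m}
    have h1 : (fun θ => deriv (Ψ (n : ℕ)) θ - Ψ (n : ℕ) θ) ∈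
        Submodule.span ℝ ((fun j : ℕ => Ψ j) '' {j | j < (m : ℕ)}) :=
      Submodule.span_mono (Set.image_mono (fun j (hj : j < (n:ℕ)) =>
        Set.mem_setOf_eq ▸ lt_trans hj hmn)) (hder (n : ℕ)).2
    have h2 : Ψ (n : ℕ) ∈ Submodule.span ℝ ((fun j : ℕ => Ψ j) '' {j | j < (m : ℕ)}) :=
      Submodule.subset_span ⟨n, hmn, rfl⟩
    have h3 : (fun θ => deriv (Ψ (n : ℕ)) θ) ∈
        Submodule.span ℝ ((fun j : ℕ => Ψ j) '' {j | j < (m : ℕ)}) := by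
      have heq : (fun θ => deriv (Ψ (n:ℕ)) θ)
          = (fun θ => deriv (Ψ (n:ℕ)) θ - Ψ (n:ℕ) θ) + Ψ (n:ℕ) := by
        funext θ; simp
      rw [heq]; exact Submodule.add_mem _ h1 h2
    exact (hint0 (m : ℕ) _ h3).2
  -- diagonal entries are 1
  have hdiag : ∀ n : Fin N, S n n = 1 := by
    intro n
    rw [hS n n]
    obtain ⟨hc, hz⟩ := hint0 (n : ℕ) _ (hder (n : ℕ)).2
    have hiz : IntervalIntegrable (fun θ => (deriv (Ψ (n:ℕ)) θ - Ψ (n:ℕ) θ) * Ψ (n:ℕ) θ)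
        volume 0 (2 * π) := (hc.mul (hΨcont (n:ℕ))).intervalIntegrable _ _
    have hiΨ : IntervalIntegrable (fun θ => Ψ (n:ℕ) θ * Ψ (n:ℕ) θ) volume 0 (2 * π) :=
      ((hΨcont (n:ℕ)).mul (hΨcont (n:ℕ))).intervalIntegrable _ _
    have hsplit : (∫ θ in (0:ℝ)..(2 * π), deriv (Ψ (n:ℕ)) θ * Ψ (n:ℕ) θ)
        = (∫ θ in (0:ℝ)..(2 * π), (deriv (Ψ (n:ℕ)) θ - Ψ (n:ℕ) θ) * Ψ (n:ℕ) θ)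
          + ∫ θ in (0:ℝ)..(2 * π), Ψ (n:ℕ) θ * Ψ (n:ℕ) θ := by
      rw [← intervalIntegral.integral_add hiz hiΨ]
      congr 1; funext θ; ring
    rw [hsplit, hz, horth (n:ℕ) (n:ℕ), if_pos rfl, zero_add]
  -- determinant and invertibility
  have hbt : S.BlockTriangular id := fun m n h => hlow m n h
  have hdet : S.det = 1 := by
    rw [Matrix.det_of_upperTriangular hbt]
    exact Finset.prod_eq_one fun n _ => hdiag n
  exact ⟨hlow, hdiag, hdet, (Matrix.isUnit_iff_isUnit_det S).mpr (hdet ▸ isUnit_one)⟩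
end
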